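/- arXiv:cs/0410050 — 2 statements merged into one kernel-verified Lean document; each statement's English description precedes it below -/
import Mathlib

section
/- If the agent has perfect recall, then for every time m there exists a set of runs ℛ' ⊆ ℛ such that the sets ℛ(K(r',m)) for r' ∈ ℛ' are pairwise disjoint (i.e., for distinct r'₁, r'₂ ∈ ℛ', ℛ(K(r'₁,m)) ∩ ℛ(K(r'₂,m)) = ∅) and their union ⋃_{r' ∈ ℛ'} ℛ(K(r',m)) is all of ℛ. -/
open scoped Classical

namespace SBP

variable {L : Type*}

/-- A point: a run together with a time. -/
abbrev Point (L : Type*) := (ℕ → L) × ℕ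

/-- The information set `K(r,m)`: all points `(r',m')` with `r' ∈ ℛ` and `r' m' = r m`. -/
def K (ℛ : Finset (ℕ → L)) (r : ℕ → L) (m : ℕ) : Set (Point L) :=
  {p | p.1 ∈ ℛ ∧ p.1 p.2 = r m}

/-- `ℛ(U)`: the runs of `ℛ` passing through some point of `U`. -/
noncomputable def runsOf (ℛ : Finset (ℕ → L)) (U : Set (Point L)) : Finset (ℕ → L) :=
  ℛ.filter fun r' => ∃ m', (r', m') ∈ U

/-- A system is synchronous if indistinguishable points occur at the same time. -/
def Synchronous (ℛ : Finset (ℕ → L)) : Prop :=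
  ∀ r ∈ ℛ, ∀ r' ∈ ℛ, ∀ m m' : ℕ, r m = r' m' → m = m'

/-- The local-state sequence of run `r` at time `m`:
`r 0, r 1, …, r m` with consecutive repetitions removed. -/
noncomputable def lseq (r : ℕ → L) (m : ℕ) : List L :=
  ((List.range (m + 1)).map r).destutter (· ≠ ·)

/-- Perfect recall: indistinguishable points have the same local-state sequence. -/
def PerfectRecall (ℛ : Finset (ℕ → L)) : Prop :=
  ∀ r ∈ ℛ, ∀ r' ∈ ℛ, ∀ m m' : ℕ, r m = r' m' → lseq r m = lseq r' m'

/-- A run-based event: contains all points of a run or none of them. -/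
def RunBased (U : Set (Point L)) : Prop :=
  ∀ (r' : ℕ → L) (k k' : ℕ), (r', k) ∈ U → (r', k') ∈ U

/-- The probability of a (finite) set of runs. -/
noncomputable def PrS (pr : (ℕ → L) → ℝ) (S : Finset (ℕ → L)) : ℝ := ∑ r ∈ S, pr r

/-- `n_{(r,m)}(r')`: the number of points of the information set `K(r,m)` lying on run `r'`. -/
noncomputable def npts (r : ℕ → L) (m : ℕ) (r' : ℕ → L) : ℕ :=
  Nat.card {k : ℕ | r' k = r m}

/-- The Elga probability of a single point, for the agent at the point `(r,m)`. -/
noncomputable def elga (ℛ : Finset (ℕ → L)) (pr : (ℕ → L) → ℝ) (r : ℕ → L) (m : ℕ)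
    (p : Point L) : ℝ :=
  if p ∈ K ℛ r m then
    pr p.1 / ∑ r'' ∈ runsOf ℛ (K ℛ r m), pr r'' * (npts r m r'' : ℝ)
  else 0

private theorem mem_destutter'_ne (l : List L) :
    ∀ (a x : L), x ∈ a :: l → x ∈ l.destutter' (· ≠ ·) a := by
  induction l with
  | nil => intro a x hx; simpa [List.destutter'] using hx
  | cons b t ih =>
    intro a x hx
    rw [List.destutter'_cons]
    by_cases hab : a ≠ b
    · rw [if_pos hab]
      rcases List.mem_cons.1 hx with h | h
      · exact h ▸ List.mem_cons_self
      · exact List.mem_cons_of_mem _ (ih b x h)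
    · rw [if_neg hab]
      push_neg at hab
      subst hab
      rcases List.mem_cons.1 hx with h | h
      · exact ih a x (h ▸ List.mem_cons_self)
      · exact ih a x h

private theorem mem_destutter_ne {l : List L} {x : L} (hx : x ∈ l) :
    x ∈ l.destutter (· ≠ ·) := by
  cases l with
  | nil => simp at hx
  | cons a t => exact mem_destutter'_ne t a x hx

private theorem mem_runsOfK {ℛ : Finset (ℕ → L)} {r t : ℕ → L} {m : ℕ} :
    t ∈ runsOf ℛ (K ℛ r m) ↔ t ∈ ℛ ∧ ∃ k, t k = r m := by
  constructor
  · rintro ht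
    rw [runsOf, Finset.mem_filter] at ht
    obtain ⟨htℛ, k, hk⟩ := ht
    exact ⟨htℛ, k, hk.2⟩
  · rintro ⟨htℛ, k, hk⟩
    rw [runsOf, Finset.mem_filter]
    exact ⟨htℛ, k, htℛ, hk⟩

private theorem self_mem_runsOfK {ℛ : Finset (ℕ → L)} {r : ℕ → L} {m : ℕ} (hr : r ∈ ℛ) :
    r ∈ runsOf ℛ (K ℛ r m) :=
  mem_runsOfK.2 ⟨hr, m, rfl⟩

/-- value occurring at time `≤ m` is in `lseq`. -/
private theorem val_mem_lseq {s : ℕ → L} {k m : ℕ} (h : k ≤ m) : s k ∈ lseq s m := by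
  apply mem_destutter_ne
  exact List.mem_map.2 ⟨k, List.mem_range.2 (Nat.lt_succ_of_le h), rfl⟩

private theorem mem_lseq_exists {t : ℕ → L} {k : ℕ} {x : L} (hx : x ∈ lseq t k) :
    ∃ j, t j = x := by
  have := (List.destutter_sublist (· ≠ ·) ((List.range (k + 1)).map t)).mem hx
  obtain ⟨j, _, hj⟩ := List.mem_map.1 this
  exact ⟨j, hj⟩

/-- Directional nesting: if `s` witnesses membership in both classes with `k₁ ≤ k₂`,
then the class of `r₂` is inside that of `r₁`. -/
private theorem runsOf_subset_aux {ℛ : Finset (ℕ → L)} (hrec : PerfectRecall ℛ)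
    {r₁ r₂ s : ℕ → L} {m k₁ k₂ : ℕ} (hr₁ : r₁ ∈ ℛ) (hr₂ : r₂ ∈ ℛ) (hs : s ∈ ℛ)
    (h1 : s k₁ = r₁ m) (h2 : s k₂ = r₂ m) (hk : k₁ ≤ k₂) :
    runsOf ℛ (K ℛ r₂ m) ⊆ runsOf ℛ (K ℛ r₁ m) := by
  intro t ht
  obtain ⟨htℛ, k, htk⟩ := mem_runsOfK.1 ht
  have hlseq : lseq t k = lseq s k₂ := hrec t htℛ s hs k k₂ (htk.trans h2.symm)
  have : s k₁ ∈ lseq t k := hlseq ▸ val_mem_lseq hk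
  obtain ⟨j, hj⟩ := mem_lseq_exists this
  exact mem_runsOfK.2 ⟨htℛ, j, hj.trans h1⟩

/-- Overlapping classes are nested. -/
private theorem runsOf_nested {ℛ : Finset (ℕ → L)} (hrec : PerfectRecall ℛ)
    {r₁ r₂ : ℕ → L} {m : ℕ} (hr₁ : r₁ ∈ ℛ) (hr₂ : r₂ ∈ ℛ)
    (h : (runsOf ℛ (K ℛ r₁ m) ∩ runsOf ℛ (K ℛ r₂ m)).Nonempty) :
    runsOf ℛ (K ℛ r₁ m) ⊆ runsOf ℛ (K ℛ r₂ m) ∨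
      runsOf ℛ (K ℛ r₂ m) ⊆ runsOf ℛ (K ℛ r₁ m) := by
  obtain ⟨s, hs⟩ := h
  obtain ⟨hs1, hs2⟩ := Finset.mem_inter.1 hs
  obtain ⟨hsℛ, k₁, hk₁⟩ := mem_runsOfK.1 hs1
  obtain ⟨-, k₂, hk₂⟩ := mem_runsOfK.1 hs2
  rcases le_total k₁ k₂ with hk | hk
  · exact Or.inr (runsOf_subset_aux hrec hr₁ hr₂ hsℛ hk₁ hk₂ hk)
  · exact Or.inl (runsOf_subset_aux hrec hr₂ hr₁ hsℛ hk₂ hk₁ hk)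

private theorem runs_partition_aux {ℛ : Finset (ℕ → L)} (hrec : PerfectRecall ℛ) (m : ℕ) :
    ∀ n (T : Finset (ℕ → L)), T.card ≤ n → T ⊆ ℛ →
      (∀ r ∈ T, runsOf ℛ (K ℛ r m) ⊆ T) →
      ∃ ℛ' : Finset (ℕ → L), ℛ' ⊆ T ∧
        (∀ r₁ ∈ ℛ', ∀ r₂ ∈ ℛ', r₁ ≠ r₂ →
            runsOf ℛ (K ℛ r₁ m) ∩ runsOf ℛ (K ℛ r₂ m) = ∅) ∧
        ℛ'.biUnion (fun r' => runsOf ℛ (K ℛ r' m)) = T := by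
  intro n
  induction n with
  | zero =>
    intro T hcard _ _
    have : T = ∅ := Finset.card_eq_zero.1 (Nat.le_zero.1 hcard)
    exact ⟨∅, by simp [this]⟩
  | succ n ih =>
    intro T hcard hTℛ hclosed
    rcases T.eq_empty_or_nonempty with rfl | hTne
    · exact ⟨∅, by simp⟩
    obtain ⟨r, hrT, hrmax⟩ :=
      Finset.exists_max_image T (fun r => (runsOf ℛ (K ℛ r m)).card) hTne
    set f : (ℕ → L) → Finset (ℕ → L) := fun r => runsOf ℛ (K ℛ r m) with hf
    have hrℛ : r ∈ ℛ := hTℛ hrT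
    have hrfr : r ∈ f r := self_mem_runsOfK hrℛ
    have hfrT : f r ⊆ T := hclosed r hrT
    -- T' := T \ f r
    set T' : Finset (ℕ → L) := T \ f r with hT'
    have hT'card : T'.card ≤ n := by
      have h1 : T'.card = T.card - (f r).card := Finset.card_sdiff_of_subset hfrT
      have h2 : 1 ≤ (f r).card := Finset.card_pos.2 ⟨r, hrfr⟩
      omega
    have hdisj : ∀ t ∈ T', f t ∩ f r = ∅ := by
      intro t htT'
      obtain ⟨htT, htfr⟩ := Finset.mem_sdiff.1 htT'
      by_contra hne
      have hnonempty : (f t ∩ f r).Nonempty := Finset.nonempty_iff_ne_empty.2 hne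
      have htℛ : t ∈ ℛ := hTℛ htT
      rcases runsOf_nested hrec htℛ hrℛ hnonempty with hsub | hsub
      · exact htfr (hsub (self_mem_runsOfK htℛ))
      · have hle : (f t).card ≤ (f r).card := hrmax t htT
        have heq := Finset.eq_of_subset_of_card_le hsub hle
        have ht2 : t ∈ runsOf ℛ (K ℛ t m) := self_mem_runsOfK htℛ
        rw [← heq] at ht2
        exact htfr ht2
    have hclosed' : ∀ t ∈ T', f t ⊆ T' := by
      intro t htT' u hu
      obtain ⟨htT, _⟩ := Finset.mem_sdiff.1 htT'
      refine Finset.mem_sdiff.2 ⟨hclosed t htT hu, fun hufr => ?_⟩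
      have : u ∈ f t ∩ f r := Finset.mem_inter.2 ⟨hu, hufr⟩
      simp [hdisj t htT'] at this
    obtain ⟨ℛ'', hsub'', hdisj'', hunion''⟩ :=
      ih T' hT'card (fun x hx => hTℛ (Finset.mem_sdiff.1 hx).1) hclosed'
    refine ⟨insert r ℛ'', ?_, ?_, ?_⟩
    · intro x hx
      rcases Finset.mem_insert.1 hx with rfl | hx
      · exact hrT
      · exact (Finset.mem_sdiff.1 (hsub'' hx)).1
    · intro r₁ h₁ r₂ h₂ hne
      have key : ∀ u ∈ ℛ'', f r ∩ f u = ∅ := by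
        intro u hu
        have hfu : f u ⊆ T' := hunion'' ▸ fun x hx => Finset.mem_biUnion.2 ⟨u, hu, hx⟩
        apply Finset.eq_empty_iff_forall_notMem.2
        intro x hx
        obtain ⟨hx1, hx2⟩ := Finset.mem_inter.1 hx
        exact (Finset.mem_sdiff.1 (hfu hx2)).2 hx1
      rcases Finset.mem_insert.1 h₁ with he₁ | hm₁
      · rcases Finset.mem_insert.1 h₂ with he₂ | hm₂
        · exact absurd (he₁.trans he₂.symm) hne
        · rw [he₁]; exact key r₂ hm₂
      · rcases Finset.mem_insert.1 h₂ with he₂ | hm₂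
        · rw [he₂, Finset.inter_comm]; exact key r₁ hm₁
        · exact hdisj'' r₁ hm₁ r₂ hm₂ hne
    · rw [Finset.biUnion_insert, hunion'', hT']
      exact Finset.union_sdiff_of_subset hfrT

/-- With perfect recall, for every time `m` there is a set `ℛ'` of runs such that the
sets `ℛ(K(r',m))`, `r' ∈ ℛ'`, are pairwise disjoint and together cover all of `ℛ`. -/
theorem runs_partition (ℛ : Finset (ℕ → L)) (hne : ℛ.Nonempty)
    (hrec : PerfectRecall ℛ) (m : ℕ) :
    ∃ ℛ' : Finset (ℕ → L), ℛ' ⊆ ℛ ∧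
      (∀ r₁ ∈ ℛ', ∀ r₂ ∈ ℛ', r₁ ≠ r₂ →
          runsOf ℛ (K ℛ r₁ m) ∩ runsOf ℛ (K ℛ r₂ m) = ∅) ∧
      ℛ'.biUnion (fun r' => runsOf ℛ (K ℛ r' m)) = ℛ := by
  exact runs_partition_aux hrec m ℛ.card ℛ le_rfl (fun _ h => h)
    (fun r _ => Finset.filter_subset _ _)

end SBP
end

section
/- (Reflection for systems with perfect recall.) Let ℛ be a (synchronous or asynchronous) system in which the agent has perfect recall, let Pr be a probability measure on ℛ with Pr({r'}) > 0 for every run r', let (r,0) be a point and m a time, and let K(r₁,m), …, K(r_k,m) be the distinct information sets of the form K(r',m) for r' ∈ ℛ(K(r,0)). Then there exist nonnegative reals α₁, …, α_k with Σ_{j=1}^k α_j = 1 such that for every set of runs S ⊆ ℛ: Pr(S | ℛ(K(r,0))) = Σ_{j=1}^k α_j · Pr(S | ℛ(K(r_j,m))). -/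
open scoped Classical

namespace SBP

variable {L : Type*}

/-- Conditional probability of a set of runs `S` given a set of runs `T`. -/
noncomputable def condP (pr : (ℕ → L) → ℝ) (S T : Finset (ℕ → L)) : ℝ :=
  PrS pr (S ∩ T) / PrS pr T

section DestutterAux

variable {α : Type*}

private lemma destutter'_head?_ne (l : List α) (b : α) :
    (l.destutter' (· ≠ ·) b).head? = some b := by
  induction l generalizing b with
  | nil => rfl
  | cons c l ih =>
    rw [List.destutter'_cons]
    split_ifs with h
    · rfl
    · exact ih b

private lemma destutter'_concat_ne (l : List α) (b a : α) :
    ((l ++ [a]).destutter' (· ≠ ·) b) =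
      if l.getLastD b ≠ a then l.destutter' (· ≠ ·) b ++ [a]
      else l.destutter' (· ≠ ·) b := by
  induction l generalizing b with
  | nil => simp [List.destutter'_singleton]
  | cons c l ih =>
    rw [List.cons_append, List.destutter'_cons, List.destutter'_cons, List.getLastD_cons]
    by_cases h : b ≠ c
    · rw [if_pos h, if_pos h, ih c]
      split_ifs <;> simp
    · rw [if_neg h, if_neg h]
      push_neg at h
      subst h
      exact ih b

end DestutterAux

section LseqAux

variable {L : Type*} {r : ℕ → L} {n : ℕ}

private lemma lseq_eq (r : ℕ → L) (n : ℕ) :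
    lseq r n = ((List.range n).map fun i => r (i + 1)).destutter' (· ≠ ·) (r 0) := by
  rw [lseq, List.range_succ_eq_map, List.map_cons, List.destutter_cons', List.map_map]
  rfl

private lemma lseq_zero (r : ℕ → L) : lseq r 0 = [r 0] := by
  rw [lseq_eq]; rfl

private lemma lseq_head? (r : ℕ → L) (n : ℕ) : (lseq r n).head? = some (r 0) := by
  rw [lseq_eq]; exact destutter'_head?_ne _ _

private lemma getLastD_range_map (r : ℕ → L) (n : ℕ) :
    (((List.range n).map fun i => r (i + 1)).getLastD (r 0)) = r n := by
  cases n with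
  | zero => rfl
  | succ n => rw [List.range_succ, List.map_append, List.map_singleton, List.getLastD_concat]

private lemma lseq_succ (r : ℕ → L) (n : ℕ) :
    lseq r (n + 1) = if r n ≠ r (n + 1) then lseq r n ++ [r (n + 1)] else lseq r n := by
  rw [lseq_eq, lseq_eq r n, List.range_succ, List.map_append, List.map_singleton,
    destutter'_concat_ne, getLastD_range_map]

private lemma lseq_getLast? (r : ℕ → L) (n : ℕ) : (lseq r n).getLast? = some (r n) := by
  induction n with
  | zero => rw [lseq_zero]; rfl
  | succ n ih =>
    rw [lseq_succ]
    split_ifs with h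
    · exact List.getLast?_concat
    · push_neg at h
      rw [← h]; exact ih

private lemma lseq_prefix (r : ℕ → L) {t t' : ℕ} (h : t ≤ t') : lseq r t <+: lseq r t' := by
  induction t' with
  | zero => rw [Nat.le_zero.mp h]
  | succ t' ih =>
    rcases Nat.lt_or_ge t (t' + 1) with h' | h'
    · have := ih (Nat.lt_succ_iff.mp h')
      rw [lseq_succ]
      split_ifs with hne
      · exact this.trans (List.prefix_append _ _)
      · exact this
    · rw [Nat.le_antisymm h h']

private lemma lseq_mem {a : L} (h : a ∈ lseq r n) : ∃ t, r t = a := by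
  rw [lseq] at h
  have h2 := (List.destutter_sublist _ _).subset h
  simp only [List.mem_map, List.mem_range] at h2
  obtain ⟨t, _, ht⟩ := h2
  exact ⟨t, ht⟩

end LseqAux

private lemma mem_runsOf_K {L : Type*} {ℛ : Finset (ℕ → L)} {r' r₀ : ℕ → L} {m₀ : ℕ} :
    r' ∈ runsOf ℛ (K ℛ r₀ m₀) ↔ r' ∈ ℛ ∧ ∃ t, r' t = r₀ m₀ := by
  simp only [runsOf, K, Finset.mem_filter, Set.mem_setOf_eq]
  tauto

private lemma reflection_of_partition {L : Type*} (ℛ : Finset (ℕ → L))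
    (pr : (ℕ → L) → ℝ) (hpos : ∀ r' ∈ ℛ, 0 < pr r')
    {k : ℕ} (A : Finset (ℕ → L)) (T : Fin k → Finset (ℕ → L)) (M : Finset (Fin k))
    (hAsub : A ⊆ ℛ) (hTsub : ∀ j, T j ⊆ ℛ)
    (hAne : A.Nonempty) (hTne : ∀ j, (T j).Nonempty)
    (hTA : ∀ j ∈ M, T j ⊆ A)
    (hpart : ∀ r' ∈ A, ∃! j, j ∈ M ∧ r' ∈ T j) :
    ∃ α : Fin k → ℝ, (∀ j, 0 ≤ α j) ∧ (∑ j : Fin k, α j = 1) ∧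
      ∀ S : Finset (ℕ → L), condP pr S A = ∑ j : Fin k, α j * condP pr S (T j) := by
  classical
  have prpos : ∀ B : Finset (ℕ → L), B ⊆ ℛ → B.Nonempty → 0 < PrS pr B := by
    intro B hB hBne
    exact Finset.sum_pos (fun x hx => hpos x (hB hx)) hBne
  have hPA : 0 < PrS pr A := prpos A hAsub hAne
  have hPT : ∀ j, 0 < PrS pr (T j) := fun j => prpos _ (hTsub j) (hTne j)
  have keyUnion : ∀ S : Finset (ℕ → L), S ∩ A = M.biUnion fun j => S ∩ T j := by
    intro S
    ext r'
    simp only [Finset.mem_inter, Finset.mem_biUnion]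
    constructor
    · rintro ⟨hS, hA'⟩
      obtain ⟨j, ⟨hjM, hjT⟩, _⟩ := hpart r' hA'
      exact ⟨j, hjM, hS, hjT⟩
    · rintro ⟨j, hjM, hS, hjT⟩
      exact ⟨hS, hTA j hjM hjT⟩
  have disj : ∀ S : Finset (ℕ → L),
      (↑M : Set (Fin k)).PairwiseDisjoint fun j => S ∩ T j := by
    intro S i hi j hj hij
    rw [Function.onFun, Finset.disjoint_left]
    intro r' hri hrj
    rw [Finset.mem_inter] at hri hrj
    have hA' : r' ∈ A := hTA i (Finset.mem_coe.mp hi) hri.2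
    obtain ⟨j', _, huniq⟩ := hpart r' hA'
    have hi' : i = j' := huniq i ⟨Finset.mem_coe.mp hi, hri.2⟩
    have hj'' : j = j' := huniq j ⟨Finset.mem_coe.mp hj, hrj.2⟩
    exact hij (hi'.trans hj''.symm)
  have sumEq : ∀ S : Finset (ℕ → L), PrS pr (S ∩ A) = ∑ j ∈ M, PrS pr (S ∩ T j) := by
    intro S
    rw [keyUnion S, PrS, Finset.sum_biUnion (disj S)]
    rfl
  refine ⟨fun j => if j ∈ M then PrS pr (T j) / PrS pr A else 0, ?_, ?_, ?_⟩
  · intro j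
    dsimp only
    split_ifs
    · exact div_nonneg (hPT _).le hPA.le
    · exact le_rfl
  · dsimp only
    have h1 : PrS pr A = ∑ j ∈ M, PrS pr (T j) := by
      have h2 := sumEq ℛ
      rw [Finset.inter_eq_right.mpr hAsub] at h2
      have h3 : ∀ j ∈ M, PrS pr (ℛ ∩ T j) = PrS pr (T j) := by
        intro j _
        rw [Finset.inter_eq_right.mpr (hTsub j)]
      rw [h2]
      exact Finset.sum_congr rfl h3
    rw [Finset.sum_ite_mem, Finset.univ_inter, ← Finset.sum_div, ← h1, div_self hPA.ne']
  · intro S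
    dsimp only
    have hterm : ∀ j ∈ M, PrS pr (T j) / PrS pr A * condP pr S (T j)
        = PrS pr (S ∩ T j) / PrS pr A := by
      intro j _
      have h1 := (hPT j).ne'
      have h2 := hPA.ne'
      rw [condP]
      field_simp
    calc condP pr S A = PrS pr (S ∩ A) / PrS pr A := rfl
      _ = (∑ j ∈ M, PrS pr (S ∩ T j)) / PrS pr A := by rw [sumEq S]
      _ = ∑ j ∈ M, PrS pr (S ∩ T j) / PrS pr A := Finset.sum_div _ _ _
      _ = ∑ j ∈ M, (PrS pr (T j) / PrS pr A * condP pr S (T j)) :=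
          (Finset.sum_congr rfl hterm).symm
      _ = ∑ j : Fin k, (if j ∈ M then PrS pr (T j) / PrS pr A else 0) * condP pr S (T j) := by
          simp only [ite_mul, zero_mul]
          rw [Finset.sum_ite_mem, Finset.univ_inter]

private lemma mem_of_getLast?_eq {α : Type*} {l : List α} {a : α}
    (h : l.getLast? = some a) : a ∈ l := by
  obtain ⟨hne, heq⟩ := List.mem_getLast?_eq_getLast (Option.mem_def.mpr h)
  rw [heq]
  exact List.getLast_mem hne

/-- Reflection for systems with perfect recall: the current conditional probability is a
convex combination of the possible later conditional probabilities. -/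
theorem reflection (ℛ : Finset (ℕ → L)) (hne : ℛ.Nonempty)
    (hrec : PerfectRecall ℛ)
    (pr : (ℕ → L) → ℝ) (hpos : ∀ r' ∈ ℛ, 0 < pr r') (hsum : ∑ r' ∈ ℛ, pr r' = 1)
    (r : ℕ → L) (hr : r ∈ ℛ) (m : ℕ)
    (k : ℕ) (rs : Fin k → ℕ → L)
    (hmem : ∀ j : Fin k, rs j ∈ runsOf ℛ (K ℛ r 0))
    (hdist : Function.Injective fun j : Fin k => K ℛ (rs j) m)
    (hall : ∀ r' ∈ runsOf ℛ (K ℛ r 0), ∃ j : Fin k, K ℛ r' m = K ℛ (rs j) m) :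
    ∃ α : Fin k → ℝ, (∀ j : Fin k, 0 ≤ α j) ∧ (∑ j : Fin k, α j = 1) ∧
      ∀ S : Finset (ℕ → L), S ⊆ ℛ →
        condP pr S (runsOf ℛ (K ℛ r 0)) =
          ∑ j : Fin k, α j * condP pr S (runsOf ℛ (K ℛ (rs j) m)) := by
  classical
  have memA : ∀ r' : ℕ → L, r' ∈ runsOf ℛ (K ℛ r 0) ↔ r' ∈ ℛ ∧ ∃ t, r' t = r 0 :=
    fun r' => mem_runsOf_K
  have memT : ∀ (j : Fin k) (r' : ℕ → L),
      r' ∈ runsOf ℛ (K ℛ (rs j) m) ↔ r' ∈ ℛ ∧ ∃ t, r' t = rs j m :=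
    fun j r' => mem_runsOf_K
  have hrsR : ∀ j, rs j ∈ ℛ := fun j => ((memA _).1 (hmem j)).1
  have zero_eq : ∀ r' ∈ ℛ, ∀ t, r' t = r 0 → r' 0 = r 0 := by
    intro r' hr' t ht
    have h1 : lseq r' t = lseq r 0 := hrec r' hr' r hr t 0 ht
    have h2 : some (r' 0) = some (r 0) := by
      rw [← lseq_head? r' t, h1, lseq_head?]
    exact Option.some.inj h2
  have hrs0 : ∀ j, rs j 0 = r 0 := by
    intro j
    obtain ⟨hj, t, ht⟩ := (memA _).1 (hmem j)
    exact zero_eq _ hj t ht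
  have state_of_K : ∀ r' ∈ ℛ, ∀ j : Fin k, K ℛ r' m = K ℛ (rs j) m → r' m = rs j m := by
    intro r' hr' j h
    have h2 : ((r', m) : Point L) ∈ K ℛ r' m := ⟨hr', rfl⟩
    rw [h] at h2
    exact h2.2
  have idx_of_state : ∀ i j : Fin k, rs i m = rs j m → i = j := by
    intro i j h
    apply hdist
    show K ℛ (rs i) m = K ℛ (rs j) m
    unfold K
    rw [h]
  have ℓ_last : ∀ j : Fin k, (lseq (rs j) m).getLast? = some (rs j m) :=
    fun j => lseq_getLast? _ _
  have ℓ_inj : ∀ i j : Fin k, lseq (rs i) m = lseq (rs j) m → i = j := by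
    intro i j h
    apply idx_of_state
    have h2 := ℓ_last i
    rw [h, ℓ_last j] at h2
    exact (Option.some.inj h2).symm
  have lseq_of_state : ∀ r' ∈ ℛ, ∀ (t : ℕ) (j : Fin k),
      r' t = rs j m → lseq r' t = lseq (rs j) m :=
    fun r' hr' t j h => hrec r' hr' (rs j) (hrsR j) t m h
  have TsubA : ∀ j : Fin k, runsOf ℛ (K ℛ (rs j) m) ⊆ runsOf ℛ (K ℛ r 0) := by
    intro j r' h
    obtain ⟨hr', t, ht⟩ := (memT j r').1 h
    have hl := lseq_of_state r' hr' t j ht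
    have h2 : some (r' 0) = some (rs j 0) := by
      rw [← lseq_head? r' t, hl, lseq_head?]
    rw [memA]
    exact ⟨hr', 0, by rw [Option.some.inj h2, hrs0 j]⟩
  have transfer : ∀ i j : Fin k, lseq (rs i) m <+: lseq (rs j) m →
      ∀ r' ∈ runsOf ℛ (K ℛ (rs j) m), r' ∈ runsOf ℛ (K ℛ (rs i) m) := by
    intro i j hpre r' h
    obtain ⟨hr', t, ht⟩ := (memT j r').1 h
    have hl := lseq_of_state r' hr' t j ht
    have hmemi : rs i m ∈ lseq (rs i) m := mem_of_getLast?_eq (ℓ_last i)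
    have h3 : rs i m ∈ lseq r' t := by
      rw [hl]; exact hpre.subset hmemi
    obtain ⟨t', ht'⟩ := lseq_mem h3
    exact (memT i r').2 ⟨hr', t', ht'⟩
  have chain : ∀ r' ∈ ℛ, ∀ (i j : Fin k) (t t' : ℕ), r' t = rs i m → r' t' = rs j m →
      lseq (rs i) m <+: lseq (rs j) m ∨ lseq (rs j) m <+: lseq (rs i) m := by
    intro r' hr' i j t t' hi hj
    rcases le_total t t' with h | h
    · left
      rw [← lseq_of_state r' hr' t i hi, ← lseq_of_state r' hr' t' j hj]
      exact lseq_prefix r' h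
    · right
      rw [← lseq_of_state r' hr' t i hi, ← lseq_of_state r' hr' t' j hj]
      exact lseq_prefix r' h
  have maxJ : ∀ r' ∈ runsOf ℛ (K ℛ r 0), ∃ j₀ : Fin k, (∃ t, r' t = rs j₀ m) ∧
      ∀ i : Fin k, (∃ t, r' t = rs i m) ↔ lseq (rs i) m <+: lseq (rs j₀) m := by
    intro r' hA'
    have hr' : r' ∈ ℛ := ((memA r').1 hA').1
    obtain ⟨j₁, hK⟩ := hall r' hA'
    have hj₁ : r' m = rs j₁ m := state_of_K r' hr' j₁ hK
    have hne' : (Finset.univ.filter fun j : Fin k => ∃ t, r' t = rs j m).Nonempty := by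
      refine ⟨j₁, ?_⟩
      simp only [Finset.mem_filter, Finset.mem_univ, true_and]
      exact ⟨m, hj₁⟩
    obtain ⟨j₀, hj₀, hmax⟩ :=
      Finset.exists_max_image _ (fun j : Fin k => (lseq (rs j) m).length) hne'
    simp only [Finset.mem_filter, Finset.mem_univ, true_and] at hj₀ hmax
    refine ⟨j₀, hj₀, fun i => ⟨?_, ?_⟩⟩
    · rintro ⟨t, ht⟩
      obtain ⟨t₀, ht₀⟩ := hj₀
      rcases chain r' hr' i j₀ t t₀ ht ht₀ with h | h
      · exact h
      · have hlen := hmax i ⟨t, ht⟩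
        rw [h.eq_of_length (le_antisymm h.length_le hlen)]
    · intro h
      obtain ⟨_, t', ht'⟩ := (memT i r').1
        (transfer i j₀ h r' ((memT j₀ r').2 ⟨hr', hj₀⟩))
      exact ⟨t', ht'⟩
  set M : Finset (Fin k) :=
    Finset.univ.filter (fun j => ∀ i, lseq (rs i) m <+: lseq (rs j) m → i = j) with hMdef
  have memM : ∀ j : Fin k, j ∈ M ↔ ∀ i, lseq (rs i) m <+: lseq (rs j) m → i = j := by
    intro j
    simp [hMdef]
  have exists_min : ∀ j₀ : Fin k, ∃ j ∈ M, lseq (rs j) m <+: lseq (rs j₀) m := by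
    suffices H : ∀ n (j₀ : Fin k), (lseq (rs j₀) m).length ≤ n →
        ∃ j ∈ M, lseq (rs j) m <+: lseq (rs j₀) m by
      intro j₀
      exact H (lseq (rs j₀) m).length j₀ le_rfl
    intro n
    induction n with
    | zero =>
      intro j₀ hn
      refine ⟨j₀, (memM j₀).2 ?_, List.prefix_refl _⟩
      intro i hi
      by_contra hne'
      have h1 : (lseq (rs i) m).length = 0 := Nat.le_zero.mp (le_trans hi.length_le hn)
      have h2 := ℓ_last i
      rw [List.length_eq_zero_iff.mp h1] at h2
      simp at h2
    | succ n ih =>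
      intro j₀ hn
      by_cases hj : j₀ ∈ M
      · exact ⟨j₀, hj, List.prefix_refl _⟩
      · rw [memM] at hj
        push_neg at hj
        obtain ⟨i, hi, hine⟩ := hj
        have hlt : (lseq (rs i) m).length < (lseq (rs j₀) m).length := by
          rcases lt_or_eq_of_le hi.length_le with h | h
          · exact h
          · exact absurd (ℓ_inj i j₀ (hi.eq_of_length h)) hine
        obtain ⟨j, hjM, hjpre⟩ := ih i (by omega)
        exact ⟨j, hjM, hjpre.trans hi⟩
  have uniq_min : ∀ j₀ j1 j2 : Fin k, j1 ∈ M → j2 ∈ M →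
      lseq (rs j1) m <+: lseq (rs j₀) m → lseq (rs j2) m <+: lseq (rs j₀) m → j1 = j2 := by
    intro j₀ j1 j2 h1 h2 hp1 hp2
    rcases List.prefix_or_prefix_of_prefix hp1 hp2 with h | h
    · exact (memM j2).1 h2 j1 h
    · exact ((memM j1).1 h1 j2 h).symm
  have partition : ∀ r' ∈ runsOf ℛ (K ℛ r 0),
      ∃! j : Fin k, j ∈ M ∧ r' ∈ runsOf ℛ (K ℛ (rs j) m) := by
    intro r' hA'
    have hr' : r' ∈ ℛ := ((memA r').1 hA').1
    obtain ⟨j₀, hj₀w, hiff⟩ := maxJ r' hA'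
    obtain ⟨j, hjM, hjpre⟩ := exists_min j₀
    refine ⟨j, ⟨hjM, (memT j r').2 ⟨hr', (hiff j).2 hjpre⟩⟩, ?_⟩
    rintro j' ⟨hj'M, hj'T⟩
    obtain ⟨_, t', ht'⟩ := (memT j' r').1 hj'T
    have hp : lseq (rs j') m <+: lseq (rs j₀) m := (hiff j').1 ⟨t', ht'⟩
    exact uniq_min j₀ j' j hj'M hjM hp hjpre
  obtain ⟨α, hα0, hα1, hαS⟩ := reflection_of_partition ℛ pr hpos
    (runsOf ℛ (K ℛ r 0)) (fun j => runsOf ℛ (K ℛ (rs j) m)) M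
    (fun x hx => ((memA x).1 hx).1) (fun j x hx => ((memT j x).1 hx).1)
    ⟨r, (memA r).2 ⟨hr, 0, rfl⟩⟩
    (fun j => ⟨rs j, (memT j (rs j)).2 ⟨hrsR j, m, rfl⟩⟩)
    (fun j _ => TsubA j) partition
  exact ⟨α, hα0, hα1, fun S _ => hαS S⟩


end SBP
end
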